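/- arXiv:2511.16817 — 9 statements merged into one kernel-verified Lean document; each statement's English description precedes it below -/
import Mathlib

section
/- For every pair of positive integers j, k there exists a number m(j,k) such that for every integer m ≥ m(j,k), the fraction m/(km+1) is not the sum of j unit fractions, i.e., there do not exist positive integers x_1, …, x_j with m/(km+1) = 1/x_1 + ⋯ + 1/x_j. -/
/-!
Sums of `j` unit fractions admit no strictly increasing sequence: for single unit fractions the
denominators would have to decrease forever, and this well-foundedness (of the reversed order)
passes to sumsets. So below `1/k` these sums stay below some `s < 1/k`, whereas
`m/(km+1) < 1/k` tends to `1/k`.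
-/

/-- `m/n` is the sum of `j` unit fractions: there are positive integers
`x 0, …, x (j-1)` with `m/n = 1/x 0 + ⋯ + 1/x (j-1)` as rational numbers. -/
def IsSumOfUnitFractions (j m n : ℕ) : Prop :=
  ∃ x : Fin j → ℕ, (∀ i, 0 < x i) ∧ (m : ℚ) / n = ∑ i, 1 / (x i : ℚ)

open Set OrderDual Filter Topology
open scoped Pointwise

def unitFractions : Set ℚ := (fun n : ℕ ↦ 1 / (n : ℚ)) '' {n | 0 < n}

theorem isWF_ofDual_preimage_unitFractions : (ofDual ⁻¹' unitFractions).IsWF := by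
  refine (isPWO_of_wellQuasiOrderedLE {n : ℕ | 0 < n}).image_of_monotoneOn
    (f := fun n : ℕ ↦ toDual (1 / (n : ℚ))) ?_ |>.isWF
  intro a ha b _ hab
  exact toDual_le_toDual.2 (one_div_le_one_div_of_le (Nat.cast_pos.2 ha) (Nat.cast_le.2 hab))

theorem isWF_ofDual_preimage_nsmul_unitFractions (j : ℕ) :
    (ofDual ⁻¹' (j • unitFractions)).IsWF := by
  induction j with
  | zero => exact isWF_singleton
  | succ j ih =>
    rw [succ_nsmul]
    exact ih.add isWF_ofDual_preimage_unitFractions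

theorem IsSumOfUnitFractions.div_mem_nsmul {j m n : ℕ} (h : IsSumOfUnitFractions j m n) :
    (m / n : ℚ) ∈ j • unitFractions := by
  obtain ⟨x, hx, hsum⟩ := h
  rw [Set.mem_nsmul]
  exact ⟨fun i ↦ ⟨1 / x i, x i, hx i, rfl⟩, by simp [List.sum_ofFn, hsum]⟩

theorem exists_lt_forall_le_of_isWF_ofDual {α : Type*} [LinearOrder α] [NoMinOrder α] {S : Set α}
    (hS : (ofDual ⁻¹' S).IsWF) (r : α) : ∃ s < r, ∀ q ∈ S, q < r → q ≤ s := by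
  set T := ofDual ⁻¹' {q ∈ S | q < r}
  have hT : T.IsWF := hS.mono fun q hq ↦ hq.1
  rcases T.eq_empty_or_nonempty with hempty | hne
  · obtain ⟨s, hs⟩ := exists_lt r
    exact ⟨s, hs, fun q hq hqr ↦ absurd (show toDual q ∈ T from ⟨hq, hqr⟩) (by simp [hempty])⟩
  · exact ⟨ofDual (hT.min hne), (hT.min_mem hne).2,
      fun q hq hqr ↦ not_lt.1 (hT.not_lt_min hne (a := toDual q) ⟨hq, hqr⟩)⟩

theorem tendsto_natCast_div_mul_add_one {k : ℕ} (hk : 0 < k) :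
    Tendsto (fun m : ℕ ↦ (m : ℚ) / (k * m + 1 : ℕ)) atTop (𝓝 (1 / k)) := by
  have hk' : (k : ℚ) ≠ 0 := by positivity
  convert (tendsto_natCast_div_add_atTop (1 / k : ℚ)).const_mul (1 / k : ℚ) using 2 with m
  · push_cast
    field_simp
  · simp

theorem natCast_div_mul_add_one_lt {k : ℕ} (hk : 0 < k) (m : ℕ) :
    (m : ℚ) / (k * m + 1 : ℕ) < 1 / k := by
  have hk' : (0 : ℚ) < k := by exact_mod_cast hk
  rw [div_lt_div_iff₀ (by positivity) hk']
  push_cast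
  linarith

theorem stmt_3 :
    ∀ j k : ℕ, 0 < j → 0 < k → ∃ M : ℕ, ∀ m : ℕ, M ≤ m →
      ¬ IsSumOfUnitFractions j m (k * m + 1) := by
  intro j k _ hk
  obtain ⟨s, hs, hgap⟩ :=
    exists_lt_forall_le_of_isWF_ofDual (isWF_ofDual_preimage_nsmul_unitFractions j) (1 / k : ℚ)
  obtain ⟨M, hM⟩ := eventually_atTop.1 ((tendsto_natCast_div_mul_add_one hk).eventually_const_lt hs)
  refine ⟨M, fun m hm hsum ↦ ?_⟩
  exact (hM m hm).not_ge (hgap _ hsum.div_mem_nsmul (natCast_div_mul_add_one_lt hk m))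
end

section
/- Let n, m be positive integers. There exists a Type I solution (x, y, z) ∈ ℕ^3 of m/n = 1/x + 1/y + 1/z if and only if there exist positive integers a, d, f such that f divides m·a^2·d + 1, m·a·d divides n + f, and (n + f)/(m·a·d) is coprime to n. -/
set_option maxHeartbeats 1000000


/-- `(x, y, z)` is a Type I solution of `m/n = 1/x + 1/y + 1/z`: a solution in
positive integers where `n` divides `x` and `n` is coprime to both `y` and `z`. -/
def IsTypeISolution (m n x y z : ℕ) : Prop :=
  0 < x ∧ 0 < y ∧ 0 < z ∧ (m : ℚ) / n = 1 / x + 1 / y + 1 / z ∧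
    n ∣ x ∧ Nat.Coprime n y ∧ Nat.Coprime n z

/-- `(x, y, z)` is a Type II solution of `m/n = 1/x + 1/y + 1/z`: a solution in
positive integers where `n` divides both `y` and `z` and `n` is coprime to `x`. -/
def IsTypeIISolution (m n x y z : ℕ) : Prop :=
  0 < x ∧ 0 < y ∧ 0 < z ∧ (m : ℚ) / n = 1 / x + 1 / y + 1 / z ∧
    Nat.Coprime n x ∧ n ∣ y ∧ n ∣ z

lemma rat_eq_nat (m n x y z : ℕ) (hn : 0 < n) (hx : 0 < x) (hy : 0 < y) (hz : 0 < z) :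
    (m : ℚ) / n = 1 / x + 1 / y + 1 / z ↔ m * (x * y * z) = n * (y * z + x * z + x * y) := by
  have hn' : (n:ℚ) ≠ 0 := Nat.cast_ne_zero.mpr hn.ne'
  have hx' : (x:ℚ) ≠ 0 := Nat.cast_ne_zero.mpr hx.ne'
  have hy' : (y:ℚ) ≠ 0 := Nat.cast_ne_zero.mpr hy.ne'
  have hz' : (z:ℚ) ≠ 0 := Nat.cast_ne_zero.mpr hz.ne'
  constructor
  · intro h
    field_simp at h
    have : (↑(m * (x * y * z)) : ℚ) = ↑(n * (y * z + x * z + x * y)) := by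
      push_cast; linarith [h]
    exact_mod_cast this
  · intro h
    have h' : (↑(m * (x * y * z)) : ℚ) = ↑(n * (y * z + x * z + x * y)) := by exact_mod_cast h
    push_cast at h'
    field_simp
    linarith [h']


lemma gcd_split (y z : ℕ) (hy : 0 < y) (hz : 0 < z) :
    ∃ g u v : ℕ, 0 < g ∧ 0 < u ∧ 0 < v ∧ y = g * u ∧ z = g * v ∧ Nat.Coprime u v ∧
      Nat.gcd y z = g := by
  refine ⟨Nat.gcd y z, y / Nat.gcd y z, z / Nat.gcd y z, ?_, ?_, ?_, ?_, ?_, ?_, rfl⟩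
  · exact Nat.gcd_pos_of_pos_left z hy
  · exact Nat.div_pos (Nat.le_of_dvd hy (Nat.gcd_dvd_left y z)) (Nat.gcd_pos_of_pos_left z hy)
  · exact Nat.div_pos (Nat.le_of_dvd hz (Nat.gcd_dvd_right y z)) (Nat.gcd_pos_of_pos_left z hy)
  · exact (Nat.mul_div_cancel' (Nat.gcd_dvd_left y z)).symm
  · exact (Nat.mul_div_cancel' (Nat.gcd_dvd_right y z)).symm
  · exact Nat.coprime_div_gcd_div_gcd (Nat.gcd_pos_of_pos_left z hy)


theorem stmt_5 (m n : ℕ) (hm : 0 < m) (hn : 0 < n) :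
    (∃ x y z : ℕ, IsTypeISolution m n x y z) ↔
      ∃ a d f : ℕ, 0 < a ∧ 0 < d ∧ 0 < f ∧
        f ∣ m * a ^ 2 * d + 1 ∧ m * a * d ∣ n + f ∧
        Nat.Coprime ((n + f) / (m * a * d)) n := by
  constructor
  · rintro ⟨x, y, z, hsol⟩
    obtain ⟨hx, hy, hz, heq, ⟨X, rfl⟩, hcy, hcz⟩ := hsol
    have hXpos : 0 < X := by
      rcases Nat.eq_zero_or_pos X with h | h
      · subst h; simp at hx
      · exact h
    rw [rat_eq_nat m n _ _ _ hn hx hy hz] at heq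
    -- step 1 : y*z*(m*X) = y*z + n*(X*(y+z))
    have h1 : y * z * (m * X) = y * z + n * (X * (y + z)) := by
      apply Nat.eq_of_mul_eq_mul_left hn
      nlinarith [heq]
    have hmX : 1 ≤ m * X := Nat.one_le_iff_ne_zero.mpr (by positivity)
    obtain ⟨K, hK⟩ : ∃ K, m * X = K + 1 := ⟨m * X - 1, by omega⟩
    have h2 : y * z * K = n * (X * (y + z)) := by
      rw [hK] at h1
      have e1 : y * z * (K + 1) = y * z * K + y * z := by ring
      rw [e1] at h1
      linarith [h1]
    -- n ∣ K
    have hcyz : Nat.Coprime n (y * z) := hcy.mul_right hcz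
    have hnK : n ∣ K := by
      have : n ∣ y * z * K := ⟨X * (y + z), h2⟩
      exact (Nat.Coprime.dvd_of_dvd_mul_left hcyz this)
    obtain ⟨k, rfl⟩ := hnK
    have hmXk : m * X = n * k + 1 := by omega
    have hkpos : 0 < k := by
      rcases Nat.eq_zero_or_pos k with h | h
      · subst h
        simp at h2
        rcases h2 with h2 | h2 | h2 <;> omega
      · exact h
    -- h3 : y*z*k = X*(y+z)
    have h3 : y * z * k = X * (y + z) := by
      apply Nat.eq_of_mul_eq_mul_left hn
      nlinarith [h2]
    -- split y z by gcd
    obtain ⟨g, u, v, hgpos, hupos, hvpos, hu, hv, huv, -⟩ := gcd_split y z hy hz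
    -- h4 : g*(u*v)*k = X*(u+v)
    have h4 : g * (u * v) * k = X * (u + v) := by
      apply Nat.eq_of_mul_eq_mul_left hgpos
      calc g * (g * (u * v) * k) = (g * u) * (g * v) * k := by ring
      _ = y * z * k := by rw [← hu, ← hv]
      _ = X * (y + z) := h3
      _ = X * (g * u + g * v) := by rw [← hu, ← hv]
      _ = g * (X * (u + v)) := by ring
    -- u*v ∣ X
    have hudvd : u ∣ X := by
      have hd : u ∣ X * (u + v) := by
        rw [← h4]; exact ⟨g * v * k, by ring⟩
      have hcu : Nat.Coprime u (u + v) := by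
        simpa using (Nat.coprime_add_self_left (m := u) (n := v)).mpr huv
      exact hcu.dvd_of_dvd_mul_right hd
    have hvdvd : v ∣ X := by
      have hd : v ∣ X * (u + v) := by
        rw [← h4]; exact ⟨g * u * k, by ring⟩
      have hcv : Nat.Coprime v (u + v) := by
        simpa [Nat.add_comm] using (Nat.coprime_add_self_left (m := v) (n := u)).mpr huv.symm
      exact hcv.dvd_of_dvd_mul_right hd
    obtain ⟨w, hw⟩ : u * v ∣ X := Nat.Coprime.mul_dvd_of_dvd_of_dvd huv hudvd hvdvd
    have hwpos : 0 < w := by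
      rcases Nat.eq_zero_or_pos w with h | h
      · subst h; simp at hw; omega
      · exact h
    -- h5 : g*k = w*(u+v)
    have h5 : g * k = w * (u + v) := by
      have huvpos : 0 < u * v := by positivity
      apply Nat.eq_of_mul_eq_mul_left huvpos
      calc u * v * (g * k) = g * (u * v) * k := by ring
      _ = X * (u + v) := h4
      _ = u * v * (w * (u + v)) := by rw [hw]; ring
    -- w ∣ g
    have hwg : w ∣ g := by
      obtain ⟨d0, w1, g1, hd0pos, hw1pos, hg1pos', hw1, hg1, hw1g1, -⟩ := gcd_split w g hwpos hgpos
      have h6 : g1 * k = w1 * (u + v) := by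
        apply Nat.eq_of_mul_eq_mul_left hd0pos
        calc d0 * (g1 * k) = (d0 * g1) * k := by ring
        _ = g * k := by rw [← hg1]
        _ = w * (u + v) := h5
        _ = d0 * (w1 * (u + v)) := by rw [hw1]; ring
      have hw1k : w1 ∣ k := by
        have hh : w1 ∣ k * g1 := ⟨u + v, by rw [Nat.mul_comm]; exact h6⟩
        exact hw1g1.dvd_of_dvd_mul_right hh
      have hw1one : w1 = 1 := by
        have d1 : w1 ∣ m * X := by
          have : w1 ∣ X := by
            rw [hw, hw1]; exact ⟨u * v * d0, by ring⟩
          exact this.mul_left m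
        rw [hmXk] at d1
        have d2 : w1 ∣ n * k := (hw1k.mul_left n)
        exact Nat.dvd_one.mp ((Nat.dvd_add_right d2).mp d1)
      have hwd0 : w = d0 := by rw [hw1, hw1one, Nat.mul_one]
      exact hwd0 ▸ ⟨g1, hg1⟩
    obtain ⟨g1, hg1⟩ := hwg
    have hg1pos : 0 < g1 := by
      rcases Nat.eq_zero_or_pos g1 with h | h
      · rw [h, Nat.mul_zero] at hg1; omega
      · exact h
    -- h7 : g1 * k = u + v
    have h7 : g1 * k = u + v := by
      apply Nat.eq_of_mul_eq_mul_left hwpos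
      calc w * (g1 * k) = (w * g1) * k := by ring
      _ = g * k := by rw [← hg1]
      _ = w * (u + v) := h5
    -- key product identity : (m*(v*w*g1))*k = n*k + (m*v^2*w + 1)
    have h8 : m * (v * w * g1) * k = n * k + (m * v ^ 2 * w + 1) := by
      calc m * (v * w * g1) * k = m * v * w * (g1 * k) := by ring
      _ = m * v * w * (u + v) := by rw [h7]
      _ = m * (u * v * w) + m * v ^ 2 * w := by ring
      _ = m * X + m * v ^ 2 * w := by rw [← hw]
      _ = n * k + (m * v ^ 2 * w + 1) := by rw [hmXk]; ring
    have hlt : n < m * (v * w * g1) := by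
      by_contra hcon
      push_neg at hcon
      have h9 : m * (v * w * g1) * k ≤ n * k := Nat.mul_le_mul_right k hcon
      zify at h8 h9
      have hC : (0:ℤ) ≤ (m:ℤ) * (v:ℤ) ^ 2 * (w:ℤ) := by positivity
      linarith [h8, h9, hC]
    refine ⟨v, w, m * (v * w * g1) - n, hvpos, hwpos, by omega, ?_, ?_, ?_⟩
    · -- f ∣ m*v^2*w + 1
      refine ⟨k, ?_⟩
      have hnf : n + (m * (v * w * g1) - n) = m * (v * w * g1) := by omega
      have : (n + (m * (v * w * g1) - n)) * k = n * k + (m * (v * w * g1) - n) * k := by ring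
      rw [hnf] at this
      zify at h8 this ⊢
      linarith [h8, this]
    · refine ⟨g1, ?_⟩
      have hnf : n + (m * (v * w * g1) - n) = m * (v * w * g1) := by omega
      rw [hnf]; ring
    · have hnf : n + (m * (v * w * g1) - n) = m * (v * w * g1) := by omega
      have hdiv : (n + (m * (v * w * g1) - n)) / (m * v * w) = g1 := by
        rw [hnf, show m * (v * w * g1) = (m * v * w) * g1 by ring]
        exact Nat.mul_div_cancel_left g1 (by positivity)
      rw [hdiv]
      have : g1 ∣ y := by rw [hu, hg1]; exact ⟨w * u, by ring⟩
      exact (Nat.Coprime.coprime_dvd_right this hcy).symm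
  · rintro ⟨a, d, f, ha, hd, hf, hfd, hmad, hcop⟩
    set e := (n + f) / (m * a * d) with hedef
    have hmadpos : 0 < m * a * d := by positivity
    have he : m * a * d * e = n + f := Nat.mul_div_cancel' hmad
    set q := (m * a ^ 2 * d + 1) / f with hqdef
    have hq : f * q = m * a ^ 2 * d + 1 := Nat.mul_div_cancel' hfd
    have hepos : 0 < e := Nat.div_pos (Nat.le_of_dvd (by omega) hmad) hmadpos
    have hqpos : 0 < q := Nat.div_pos (Nat.le_of_dvd (by omega) hfd) hf
    -- key : f*(e*q) = a*(n+f) + e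
    have hkey : f * (e * q) = a * (n + f) + e := by
      calc f * (e * q) = e * (f * q) := by ring
      _ = e * (m * a ^ 2 * d + 1) := by rw [hq]
      _ = a * (m * a * d * e) + e := by ring
      _ = a * (n + f) + e := by rw [he]
    have halt : a < e * q := by
      have h1 : f * a < f * (e * q) := by
        rw [hkey]
        calc f * a ≤ a * (n + f) := by nlinarith
        _ < a * (n + f) + e := by omega
      exact lt_of_mul_lt_mul_left h1 (Nat.zero_le f)
    set v := e * q - a with hvdef
    have hv : a + v = e * q := by omega
    have hvpos : 0 < v := by omega
    set X := a * d * v with hXdef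
    have hXpos : 0 < X := by positivity
    -- m*X = n*q + 1
    have hX : m * X = n * q + 1 := by
      have h1 : m * X + m * (a ^ 2 * d) = m * a * d * (a + v) := by rw [hXdef]; ring
      rw [hv] at h1
      have h2 : m * a * d * (e * q) = (n + f) * q := by
        calc m * a * d * (e * q) = (m * a * d * e) * q := by ring
        _ = (n + f) * q := by rw [he]
      have h3 : (n + f) * q = n * q + (m * (a ^ 2 * d) + 1) := by
        have : f * q = m * (a ^ 2 * d) + 1 := by rw [hq]; ring_nf
        calc (n + f) * q = n * q + f * q := by ring
        _ = n * q + (m * (a ^ 2 * d) + 1) := by rw [this]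
      omega
    refine ⟨n * X, d * e * v, a * d * e, ?_, by positivity, by positivity, ?_, ⟨X, rfl⟩, ?_, ?_⟩
    · positivity
    · -- the equation
      rw [rat_eq_nat m n _ _ _ hn (by positivity) (by positivity) (by positivity)]
      calc m * (n * X * (d * e * v) * (a * d * e))
          = n * (m * X) * (a * d ^ 2 * e ^ 2 * v) := by rw [hXdef]; ring
        _ = n * (n * q + 1) * (a * d ^ 2 * e ^ 2 * v) := by rw [hX]
        _ = n * ((a * d ^ 2 * e * v) * (e + n * (e * q))) := by ring
        _ = n * ((a * d ^ 2 * e * v) * (e + n * (a + v))) := by rw [hv]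
        _ = n * ((d * e * v) * (a * d * e) + n * X * (a * d * e) + n * X * (d * e * v)) := by
            rw [hXdef]; ring
    · -- Coprime n (d*e*v)
      have hnd : Nat.Coprime n (a * d) := by
        have g1 : Nat.gcd n (a * d) ∣ n + f := by
          rw [← he, show m * a * d * e = m * (a * d) * e by ring]
          exact Dvd.dvd.mul_right (Dvd.dvd.mul_left (Nat.gcd_dvd_right n (a*d)) m) e
        have g2 : Nat.gcd n (a * d) ∣ f :=
          (Nat.dvd_add_right (Nat.gcd_dvd_left n (a*d))).mp g1
        have g3 : Nat.gcd n (a * d) ∣ m * a ^ 2 * d + 1 := g2.trans hfd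
        have g4 : Nat.gcd n (a * d) ∣ m * a ^ 2 * d := by
          have : Nat.gcd n (a * d) ∣ (m * a) * (a * d) :=
            Dvd.dvd.mul_left (Nat.gcd_dvd_right n (a*d)) (m * a)
          have h' : (m * a) * (a * d) = m * a ^ 2 * d := by ring
          rwa [h'] at this
        have g5 : Nat.gcd n (a * d) ∣ 1 := (Nat.dvd_add_right g4).mp g3
        exact Nat.dvd_one.mp g5
      have hne : Nat.Coprime n e := hcop.symm
      have hnv : Nat.Coprime n v := by
        have g1 : Nat.gcd n v ∣ m * X := by
          have : Nat.gcd n v ∣ X := by rw [hXdef]; exact Dvd.dvd.mul_left (Nat.gcd_dvd_right n v) _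
          exact this.mul_left m
        rw [hX] at g1
        have g2 : Nat.gcd n v ∣ n * q := (Nat.gcd_dvd_left n v).mul_right q
        exact Nat.dvd_one.mp ((Nat.dvd_add_right g2).mp g1)
      have hndd : Nat.Coprime n d := Nat.Coprime.coprime_dvd_right (Dvd.intro_left a rfl) hnd
      exact (hndd.mul_right hne).mul_right hnv
    · -- Coprime n (a*d*e)
      have hnd : Nat.Coprime n (a * d) := by
        have g1 : Nat.gcd n (a * d) ∣ n + f := by
          rw [← he, show m * a * d * e = m * (a * d) * e by ring]
          exact Dvd.dvd.mul_right (Dvd.dvd.mul_left (Nat.gcd_dvd_right n (a*d)) m) e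
        have g2 : Nat.gcd n (a * d) ∣ f :=
          (Nat.dvd_add_right (Nat.gcd_dvd_left n (a*d))).mp g1
        have g3 : Nat.gcd n (a * d) ∣ m * a ^ 2 * d + 1 := g2.trans hfd
        have g4 : Nat.gcd n (a * d) ∣ m * a ^ 2 * d := by
          have : Nat.gcd n (a * d) ∣ (m * a) * (a * d) :=
            Dvd.dvd.mul_left (Nat.gcd_dvd_right n (a*d)) (m * a)
          have h' : (m * a) * (a * d) = m * a ^ 2 * d := by ring
          rwa [h'] at this
        have g5 : Nat.gcd n (a * d) ∣ 1 := (Nat.dvd_add_right g4).mp g3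
        exact Nat.dvd_one.mp g5
      exact hnd.mul_right hcop.symm
end

section
/- Let n, m be positive integers. There exists a Type II solution (x, y, z) ∈ ℕ^3 of m/n = 1/x + 1/y + 1/z if and only if there exist positive integers a, b, e such that e divides a + b, m·a·b divides n + e, and (n + e)/m is coprime to n. -/
/-! A Type II solution has the form `(x, n y, n z)`, and clearing denominators gives
`e y z = x (y + z)` with `n + e = m x`. As `n` is coprime to `x`, so is `e`. Writing `y = d a`,
`z = d b` with `a, b` coprime gives `e d a b = x (a + b)`, and since `a b` is coprime to `a + b`
this forces `e ∣ a + b` and `a b ∣ x`; finally `(n + e) / m = x`. Conversely, from `a + b = e k`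
and `n + e = m a b c` one gets the Type II solution `(a b c, n k a c, n k b c)`. -/

theorem typeII_equation_iff {m n x y z : ℕ} (hn : 0 < n) (hx : 0 < x) (hy : 0 < y) (hz : 0 < z) :
    (m : ℚ) / n = 1 / x + 1 / (n * y : ℕ) + 1 / (n * z : ℕ) ↔
      m * x * (y * z) = n * (y * z) + x * (y + z) := by
  rw [← Nat.cast_inj (R := ℚ)]
  push_cast
  field_simp
  constructor <;> intro h <;> linear_combination h

theorem Nat.Coprime.of_add_eq_mul {n e m x : ℕ} (hnx : Nat.Coprime n x) (h : n + e = m * x) :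
    Nat.Coprime e x := by
  have hn : Nat.gcd e x ∣ n :=
    (Nat.dvd_add_left (Nat.gcd_dvd_left e x)).1 (h ▸ (Nat.gcd_dvd_right e x).mul_left m)
  exact Nat.eq_one_of_dvd_one (hnx ▸ Nat.dvd_gcd hn (Nat.gcd_dvd_right e x))

theorem Nat.Coprime.mul_add {a b : ℕ} (hab : Nat.Coprime a b) : Nat.Coprime (a * b) (a + b) :=
  Nat.Coprime.mul_left (Nat.coprime_self_add_right.2 hab) (Nat.coprime_add_self_right.2 hab.symm)

theorem exists_dvd_add_and_mul_dvd {e x y z : ℕ} (hy : 0 < y) (hz : 0 < z)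
    (hex : Nat.Coprime e x) (h : e * (y * z) = x * (y + z)) :
    ∃ a b, 0 < a ∧ 0 < b ∧ e ∣ a + b ∧ a * b ∣ x := by
  obtain ⟨d, a, b, hd, hab, rfl, rfl⟩ := Nat.exists_coprime' (Nat.gcd_pos_of_pos_left z hy)
  have ha : 0 < a := Nat.pos_of_mul_pos_right hy
  have hb : 0 < b := Nat.pos_of_mul_pos_right hz
  have hred : e * d * (a * b) = x * (a + b) :=
    Nat.eq_of_mul_eq_mul_right hd (by linear_combination h)
  refine ⟨a, b, ha, hb, hex.dvd_of_dvd_mul_left ⟨d * (a * b), by rw [← hred]; ring⟩,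
    hab.mul_add.dvd_of_dvd_mul_right ⟨e * d, by rw [← hred]; ring⟩⟩

theorem IsTypeIISolution.exists_params {m n x y z : ℕ} (h : IsTypeIISolution m n x y z) :
    ∃ a b e : ℕ, 0 < a ∧ 0 < b ∧ 0 < e ∧
      e ∣ a + b ∧ m * a * b ∣ n + e ∧ Nat.Coprime ((n + e) / m) n := by
  obtain ⟨hx, hny, hnz, heq, hnx, ⟨y, rfl⟩, ⟨z, rfl⟩⟩ := h
  have hn : 0 < n := Nat.pos_of_mul_pos_right hny
  have hy : 0 < y := Nat.pos_of_mul_pos_left hny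
  have hz : 0 < z := Nat.pos_of_mul_pos_left hnz
  have key := (typeII_equation_iff hn hx hy hz).1 heq
  have hlt : n < m * x := by
    refine Nat.lt_of_mul_lt_mul_right (a := y * z) ?_
    have : 0 < x * (y + z) := by positivity
    omega
  obtain ⟨e, he⟩ := Nat.exists_eq_add_of_le hlt.le
  have he0 : 0 < e := by omega
  have hm : 0 < m := Nat.pos_of_mul_pos_right (b := x) (by omega)
  have hyz : e * (y * z) = x * (y + z) :=
    Nat.add_left_cancel (by rw [← key, he]; ring)
  obtain ⟨a, b, ha, hb, hab, habx⟩ :=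
    exists_dvd_add_and_mul_dvd hy hz (hnx.of_add_eq_mul he.symm) hyz
  refine ⟨a, b, e, ha, hb, he0, hab, he ▸ mul_assoc m a b ▸ mul_dvd_mul_left m habx, ?_⟩
  rw [← he, Nat.mul_div_cancel_left x hm]
  exact hnx.symm

theorem exists_typeIISolution_of_params {m n a b e : ℕ} (hn : 0 < n) (ha : 0 < a) (hb : 0 < b)
    (hab : e ∣ a + b) (habe : m * a * b ∣ n + e)
    (hco : Nat.Coprime ((n + e) / m) n) : ∃ x y z, IsTypeIISolution m n x y z := by
  obtain ⟨k, hk⟩ := hab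
  obtain ⟨c, hc⟩ := habe
  have hm : 0 < m := Nat.pos_of_ne_zero (by rintro rfl; simp at hc; omega)
  have hk0 : 0 < k := Nat.pos_of_ne_zero (by rintro rfl; simp at hk; omega)
  have hc0 : 0 < c := Nat.pos_of_ne_zero (by rintro rfl; simp at hc; omega)
  have hx : (n + e) / m = a * b * c := by
    rw [hc, mul_assoc, mul_assoc, Nat.mul_div_cancel_left _ hm, mul_assoc]
  refine ⟨a * b * c, n * (k * (a * c)), n * (k * (b * c)), by positivity, by positivity,
    by positivity, (typeII_equation_iff hn (by positivity) (by positivity) (by positivity)).2 ?_,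
    hx ▸ hco.symm, dvd_mul_right _ _, dvd_mul_right _ _⟩
  zify at hk hc ⊢
  linear_combination (-(k * (a * c) * (k * (b * c)) : ℤ)) * hc - (a * b * c * k * c : ℤ) * hk

theorem stmt_7_general (m n : ℕ) (hn : 0 < n) :
    (∃ x y z : ℕ, IsTypeIISolution m n x y z) ↔
      ∃ a b e : ℕ, 0 < a ∧ 0 < b ∧ 0 < e ∧
        e ∣ a + b ∧ m * a * b ∣ n + e ∧
        Nat.Coprime ((n + e) / m) n := by
  constructor
  · rintro ⟨x, y, z, h⟩
    exact h.exists_params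
  · rintro ⟨a, b, e, ha, hb, -, hab, habe, hco⟩
    exact exists_typeIISolution_of_params hn ha hb hab habe hco

theorem stmt_7 (m n : ℕ) (hm : 0 < m) (hn : 0 < n) :
    (∃ x y z : ℕ, IsTypeIISolution m n x y z) ↔
      ∃ a b e : ℕ, 0 < a ∧ 0 < b ∧ 0 < e ∧
        e ∣ a + b ∧ m * a * b ∣ n + e ∧
        Nat.Coprime ((n + e) / m) n :=
  stmt_7_general m n hn
end

section
/- Let m ≥ 4 be an integer and let p be a prime. There exists a Type II solution (x, y, z) ∈ ℕ^3 of m/p = 1/x + 1/y + 1/z if and only if there exist positive integers a, b, e such that e divides a + b and m·a·b divides p + e. -/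
lemma sol_iff (m p x y z : ℕ) (hp : 0 < p) (hx : 0 < x) (hy : 0 < y) (hz : 0 < z) :
    ((m : ℚ) / p = 1 / x + 1 / y + 1 / z) ↔
      m * (x * (y * z)) = p * (y * z + x * z + x * y) := by
  have hp' : (p : ℚ) ≠ 0 := Nat.cast_ne_zero.mpr hp.ne'
  have hx' : (x : ℚ) ≠ 0 := Nat.cast_ne_zero.mpr hx.ne'
  have hy' : (y : ℚ) ≠ 0 := Nat.cast_ne_zero.mpr hy.ne'
  have hz' : (z : ℚ) ≠ 0 := Nat.cast_ne_zero.mpr hz.ne'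
  constructor
  · intro h
    have h2 : (m : ℚ) * (x * (y * z)) = p * (y * z + x * z + x * y) := by
      field_simp at h
      linear_combination h
    exact_mod_cast h2
  · intro h
    have h2 : (m : ℚ) * (x * (y * z)) = p * (y * z + x * z + x * y) := by exact_mod_cast h
    field_simp
    linear_combination h2

lemma add_le_mul_add_one {a b : ℕ} (ha : 0 < a) (hb : 0 < b) : a + b ≤ a * b + 1 := by
  obtain ⟨a', rfl⟩ : ∃ a', a = a' + 1 := ⟨a - 1, by omega⟩
  obtain ⟨b', rfl⟩ : ∃ b', b = b' + 1 := ⟨b - 1, by omega⟩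
  have : (a' + 1) * (b' + 1) = a' * b' + a' + b' + 1 := by ring
  omega

theorem stmt_8 (m p : ℕ) (hm : 4 ≤ m) (hp : p.Prime) :
    (∃ x y z : ℕ, IsTypeIISolution m p x y z) ↔
      ∃ a b e : ℕ, 0 < a ∧ 0 < b ∧ 0 < e ∧
        e ∣ a + b ∧ m * a * b ∣ p + e := by
  have hp0 : 0 < p := hp.pos
  constructor
  · rintro ⟨x, y, z, hx, hy, hz, heq, hcop, hpy, hpz⟩
    obtain ⟨c, rfl⟩ := hpy
    obtain ⟨d, rfl⟩ := hpz
    have hc : 0 < c := by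
      rcases Nat.eq_zero_or_pos c with rfl | h
      · simp at hy
      · exact h
    have hd : 0 < d := by
      rcases Nat.eq_zero_or_pos d with rfl | h
      · simp at hz
      · exact h
    have NID : m * (x * ((p * c) * (p * d))) =
        p * ((p * c) * (p * d) + x * (p * d) + x * (p * c)) :=
      (sol_iff m p x (p * c) (p * d) hp0 hx hy hz).mp heq
    -- cancel p * p
    have E1 : m * (x * (c * d)) = p * (c * d) + x * d + x * c := by
      have h' : (p * p) * (m * (x * (c * d))) = (p * p) * (p * (c * d) + x * d + x * c) := by
        zify at NID ⊢
        linear_combination NID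
      exact Nat.eq_of_mul_eq_mul_left (by positivity) h'
    -- p < m * x
    have hlt : p < m * x := by
      have h1 : p * (c * d) < (m * x) * (c * d) := by
        have hxd : 0 < x * d := by positivity
        calc p * (c * d) < p * (c * d) + x * d + x * c := by omega
          _ = m * (x * (c * d)) := E1.symm
          _ = (m * x) * (c * d) := by ring
      exact lt_of_mul_lt_mul_right h1 (Nat.zero_le _)
    obtain ⟨e, he, hepos⟩ : ∃ e, m * x = p + e ∧ 0 < e :=
      ⟨m * x - p, (Nat.add_sub_cancel' hlt.le).symm, Nat.sub_pos_of_lt hlt⟩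
    have E2 : e * (c * d) = x * (c + d) := by
      zify at E1 he ⊢
      linear_combination E1 - (c : ℤ) * d * he
    -- split off gcd
    set g := Nat.gcd c d with hgdef
    have hgpos : 0 < g := Nat.gcd_pos_of_pos_left d hc
    obtain ⟨a, hca⟩ : g ∣ c := Nat.gcd_dvd_left c d
    obtain ⟨b, hdb⟩ : g ∣ d := Nat.gcd_dvd_right c d
    have ha : 0 < a := by
      rcases Nat.eq_zero_or_pos a with rfl | h
      · omega
      · exact h
    have hb : 0 < b := by
      rcases Nat.eq_zero_or_pos b with rfl | h
      · omega
      · exact h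
    have hab : Nat.Coprime a b := by
      have h1 : a = c / g := by rw [hca]; exact (Nat.mul_div_cancel_left a hgpos).symm
      have h2 : b = d / g := by rw [hdb]; exact (Nat.mul_div_cancel_left b hgpos).symm
      rw [h1, h2]
      exact Nat.coprime_div_gcd_div_gcd hgpos
    rw [hca, hdb] at E2
    have E3 : e * (g * (a * b)) = x * (a + b) := by
      have h' : g * (e * (g * (a * b))) = g * (x * (a + b)) := by
        zify at E2 ⊢
        linear_combination E2
      exact Nat.eq_of_mul_eq_mul_left hgpos h'
    -- a * b divides x
    have habcop : Nat.Coprime (a * b) (a + b) := by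
      have h1 : Nat.Coprime a (a + b) := by
        simpa using (Nat.coprime_add_self_right (m := a) (n := b)).mpr hab
      have h2 : Nat.Coprime b (a + b) := by
        have := (Nat.coprime_add_self_left (m := a) (n := b))
        simpa [Nat.coprime_comm] using (Nat.coprime_add_self_right (m := b) (n := a)).mpr hab.symm
      exact Nat.Coprime.mul h1 h2
    have habdvd : a * b ∣ x * (a + b) := ⟨e * g, by rw [← E3]; ring⟩
    have habx : a * b ∣ x := Nat.Coprime.dvd_of_dvd_mul_right habcop habdvd
    obtain ⟨k, hxk⟩ := habx
    rw [hxk] at E3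
    have E4 : e * g = k * (a + b) := by
      have h' : (a * b) * (e * g) = (a * b) * (k * (a + b)) := by
        zify at E3 ⊢
        linear_combination E3
      exact Nat.eq_of_mul_eq_mul_left (by positivity) h'
    -- gcd e k = 1
    have hek : Nat.Coprime e k := by
      have hkx : k ∣ x := ⟨a * b, by rw [hxk]; ring⟩
      have hd1 : Nat.gcd e k ∣ p := by
        have hmx : Nat.gcd e k ∣ m * x := dvd_mul_of_dvd_right ((Nat.gcd_dvd_right e k).trans hkx) m
        have hsub : m * x - e = p := by omega
        exact hsub ▸ Nat.dvd_sub hmx (Nat.gcd_dvd_left e k)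
      have hd2 : Nat.gcd e k ∣ x := (Nat.gcd_dvd_right e k).trans ⟨a * b, by rw [hxk]; ring⟩
      have : Nat.gcd e k ∣ Nat.gcd p x := Nat.dvd_gcd hd1 hd2
      rw [hcop] at this
      exact Nat.dvd_one.mp this
    have heab : e ∣ a + b := by
      have : e ∣ k * (a + b) := E4 ▸ dvd_mul_right e g
      exact (Nat.Coprime.dvd_of_dvd_mul_left hek this)
    refine ⟨a, b, e, ha, hb, hepos, heab, ⟨k, ?_⟩⟩
    rw [← he, hxk]; ring
  · rintro ⟨a, b, e, ha, hb, he, heab, hdvd⟩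
    obtain ⟨f, hf⟩ := heab
    obtain ⟨t, ht⟩ := hdvd
    have hf0 : 0 < f := by
      rcases Nat.eq_zero_or_pos f with rfl | h
      · omega
      · exact h
    have ht0 : 0 < t := by
      rcases Nat.eq_zero_or_pos t with rfl | h
      · omega
      · exact h
    refine ⟨a * b * t, p * (a * t * f), p * (b * t * f), ?_, ?_, ?_, ?_, ?_, ?_, ?_⟩
    · positivity
    · positivity
    · positivity
    · -- the equation
      apply (sol_iff m p _ _ _ hp0 (by positivity) (by positivity) (by positivity)).mpr
      zify at hf ht ⊢
      linear_combination (-(p : ℤ)^2 * a * b * t^2 * f) * hf + (-(p : ℤ)^2 * a * b * t^2 * f^2) * ht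
    · -- coprimality
      rw [Nat.Prime.coprime_iff_not_dvd hp]
      intro hdx
      have hmx : m * (a * b * t) = p + e := by rw [ht]; ring
      have hpe : p ∣ p + e := hmx ▸ dvd_mul_of_dvd_right hdx m
      have hpee : p ∣ e := (Nat.dvd_add_right dvd_rfl).mp hpe
      have h1 : p ≤ e := Nat.le_of_dvd he hpee
      have h2 : p ≤ a * b * t := Nat.le_of_dvd (by positivity) hdx
      have h3 : e ≤ a + b := Nat.le_of_dvd (by omega) ⟨f, hf⟩
      have h4 : a + b ≤ a * b + 1 := add_le_mul_add_one ha hb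
      have h5 : a * b ≤ a * b * t := Nat.le_mul_of_pos_right _ ht0
      have h6 : 4 * (a * b * t) ≤ m * (a * b * t) := Nat.mul_le_mul_right _ hm
      have h7 : 0 < a * b * t := by positivity
      linarith
    · exact ⟨a * t * f, rfl⟩
    · exact ⟨b * t * f, rfl⟩
end

section
/- For all integers n ≥ 2 the following inequalities hold: τ(n) ≤ 138.32·(n−1)^(1/6); τ'_1(n) ≤ 16.2·(n−1)^(1/6); τ'_2(n) ≤ 51.3·(n−1)^(1/6); τ'_3(n) ≤ 32.3·(n−1)^(1/6); and τ'_6(n) ≤ 102.7·(n−1)^(1/6). -/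
/-- `tau' j n` is the number of divisors `d` of `n` with `gcd(d, 6) = j`. -/
def tau' (j n : ℕ) : ℕ := (n.divisors.filter fun d => Nat.gcd d 6 = j).card

/-!
Write `n = 2^a 3^b m` with `m` coprime to `6`. A divisor `d` of `n` is determined by
`(v₂ d, v₃ d)` together with its part coprime to `6`, which divides `m`; the condition
`gcd(d, 6) = j` only decides whether `v₂ d` and `v₃ d` vanish. Hence
`τ(n) ≤ (a+1)(b+1) τ(m)` and `τ'_j(n) ≤ α β τ(m)` with `α ∈ {1, a}`, `β ∈ {1, b}`.
Prime by prime, `(e+1)^6 ≤ c_p p^e` with `c_p = 1` for `p ≥ 64`, so `τ(m)^6 ≤ A m`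
with `A = ∏_{5 ≤ p < 64} c_p ≈ 1.75·10⁷`; likewise `a^6 ≤ (9^6/2^9) 2^a` and
`b^6 ≤ (5^6/3^5) 3^b`.
Each count `t` thus satisfies `t^6 ≤ K n`, which beats `C^6 (n - 1)` beyond an explicit
threshold; below it, `τ(n) ≤ 2√n` already gives `t ≤ ⌊C⌋`.
-/

open Finset

lemma card_divisors_sq_le (n : ℕ) : #n.divisors ^ 2 ≤ 4 * n := by
  have h_small : #(n.divisors.filter (fun d => d * d ≤ n)) ≤ n.sqrt := by
    simpa using card_le_card (t := Icc 1 n.sqrt) fun d hd => by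
      rw [mem_filter] at hd
      exact mem_Icc.2 ⟨Nat.pos_of_mem_divisors hd.1, Nat.le_sqrt.2 hd.2⟩
  have h_large : #(n.divisors.filter (fun d => ¬ d * d ≤ n)) ≤
      #(n.divisors.filter (fun d => d * d ≤ n)) := by
    refine card_le_card_of_injOn (n / ·) (fun d hd => ?_) (fun d hd d' hd' h => ?_)
    · rw [coe_filter, Set.mem_ofPred_eq, not_le] at hd
      have hlt : n / d < d := (Nat.div_lt_iff_lt_mul (Nat.pos_of_mem_divisors hd.1)).2 hd.2
      rw [mem_coe, mem_filter]
      exact ⟨Nat.mem_divisors.2 ⟨Nat.div_dvd_of_dvd (Nat.dvd_of_mem_divisors hd.1),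
        Nat.ne_zero_of_mem_divisors hd.1⟩,
        (Nat.mul_le_mul_left _ hlt.le).trans (Nat.div_mul_le_self n d)⟩
    · rw [coe_filter, Set.mem_ofPred_eq, Nat.mem_divisors] at hd hd'
      rw [← Nat.div_div_self hd.1.1 hd.1.2, ← Nat.div_div_self hd'.1.1 hd'.1.2]
      exact congrArg (n / ·) h
  have h_card : #n.divisors ≤ 2 * n.sqrt := by
    rw [← card_filter_add_card_filter_not (fun d => d * d ≤ n)]
    omega
  calc #n.divisors ^ 2 ≤ (2 * n.sqrt) ^ 2 := Nat.pow_le_pow_left h_card 2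
    _ = 4 * (n.sqrt * n.sqrt) := by ring
    _ ≤ 4 * n := Nat.mul_le_mul_left 4 (Nat.sqrt_le n)

lemma succ_pow_six_le_two_mul_pow_six {e : ℕ} (he : 9 ≤ e) : (e + 1) ^ 6 ≤ 2 * e ^ 6 := by
  have : (9 * (e + 1)) ^ 6 ≤ (10 * e) ^ 6 := Nat.pow_le_pow_left (by omega) 6
  rw [mul_pow, mul_pow] at this
  omega

lemma pow_six_mul_le_of_forall_lt_ten {p D N : ℕ} (hp : 2 ≤ p)
    (h : ∀ e < 10, e ^ 6 * D ≤ N * p ^ e) (e : ℕ) : e ^ 6 * D ≤ N * p ^ e := by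
  induction e with
  | zero => exact h 0 (by norm_num)
  | succ e ih =>
    rcases lt_or_ge (e + 1) 10 with he | he
    · exact h _ he
    calc (e + 1) ^ 6 * D ≤ 2 * e ^ 6 * D :=
          Nat.mul_le_mul_right D (succ_pow_six_le_two_mul_pow_six (by omega))
      _ ≤ p * (N * p ^ e) := by rw [mul_assoc]; exact Nat.mul_le_mul hp ih
      _ = N * p ^ (e + 1) := by ring

lemma pow_six_le_two_pow (e : ℕ) : (e : ℝ) ^ 6 ≤ 531441 / 512 * 2 ^ e := by
  rw [div_mul_eq_mul_div, le_div_iff₀ (by norm_num)]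
  exact_mod_cast pow_six_mul_le_of_forall_lt_ten (D := 512) (N := 531441) le_rfl (by decide) e

lemma succ_pow_six_le_two_pow (e : ℕ) : ((e : ℝ) + 1) ^ 6 ≤ 531441 / 256 * 2 ^ e := by
  have := pow_six_le_two_pow (e + 1)
  push_cast at this
  linarith [pow_succ (2 : ℝ) e]

lemma pow_six_le_three_pow (e : ℕ) : (e : ℝ) ^ 6 ≤ 15625 / 243 * 3 ^ e := by
  rw [div_mul_eq_mul_div, le_div_iff₀ (by norm_num)]
  exact_mod_cast pow_six_mul_le_of_forall_lt_ten (D := 243) (N := 15625) (p := 3) (by norm_num)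
    (by decide) e

lemma succ_pow_six_le_three_pow (e : ℕ) : ((e : ℝ) + 1) ^ 6 ≤ 15625 / 81 * 3 ^ e := by
  have := pow_six_le_three_pow (e + 1)
  push_cast at this
  linarith [pow_succ (3 : ℝ) e]

/-- For a prime `p ≥ 5`, the exponent `e` maximising `(e + 1)^6 / p^e`. -/
def peakExponent (p : ℕ) : ℕ :=
  if p = 5 then 3 else if p ≤ 11 then 2 else if p < 64 then 1 else 0

lemma peakExponent_eq_zero {p : ℕ} (hp : 64 ≤ p) : peakExponent p = 0 := by
  unfold peakExponent; split_ifs <;> omega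

lemma succ_pow_six_mul_le {p : ℕ} (hp : 5 ≤ p) (e : ℕ) :
    (e + 1) ^ 6 * p ^ peakExponent p ≤ (peakExponent p + 1) ^ 6 * p ^ e := by
  rcases lt_or_ge p 64 with hp64 | hp64
  · have base : ∀ p < 64, 5 ≤ p → ∀ e < 10,
        e ^ 6 * p ^ (peakExponent p + 1) ≤ (peakExponent p + 1) ^ 6 * p ^ e := by
      decide
    have := pow_six_mul_le_of_forall_lt_ten (by omega) (base p hp64 hp) (e + 1)
    rw [pow_succ p (peakExponent p), pow_succ p e, ← mul_assoc, ← mul_assoc] at this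
    exact Nat.le_of_mul_le_mul_right this (by omega)
  · have hk := peakExponent_eq_zero hp64
    calc (e + 1) ^ 6 * p ^ peakExponent p ≤ (2 ^ e) ^ 6 := by
          rw [hk, pow_zero, mul_one]; exact Nat.pow_le_pow_left (Nat.lt_two_pow_self) 6
      _ = 64 ^ e := by rw [← pow_mul, mul_comm, pow_mul]; norm_num
      _ ≤ (peakExponent p + 1) ^ 6 * p ^ e := by
          rw [hk]; simpa using Nat.pow_le_pow_left hp64 e

def coprimeSixPart (n : ℕ) : ℕ := ordCompl[3] (ordCompl[2] n)

lemma coprimeSixPart_ne_zero {n : ℕ} (hn : n ≠ 0) : coprimeSixPart n ≠ 0 :=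
  (Nat.ordCompl_pos 3 (Nat.ordCompl_pos 2 hn).ne').ne'

lemma coprimeSixPart_dvd_coprimeSixPart {d n : ℕ} (h : d ∣ n) :
    coprimeSixPart d ∣ coprimeSixPart n :=
  Nat.ordCompl_dvd_ordCompl_of_dvd (Nat.ordCompl_dvd_ordCompl_of_dvd h 2) 3

lemma coprime_six_coprimeSixPart {n : ℕ} (hn : n ≠ 0) : Nat.Coprime (coprimeSixPart n) 6 := by
  have h2 : ¬ 2 ∣ coprimeSixPart n := fun h =>
    Nat.not_dvd_ordCompl Nat.prime_two hn (h.trans (Nat.ordCompl_dvd _ 3))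
  have h3 : ¬ 3 ∣ coprimeSixPart n :=
    Nat.not_dvd_ordCompl Nat.prime_three (Nat.ordCompl_pos 2 hn).ne'
  exact Nat.Coprime.mul_right (show Nat.Coprime _ 2 by
      rwa [Nat.coprime_comm, Nat.Prime.coprime_iff_not_dvd Nat.prime_two])
    (show Nat.Coprime _ 3 by rwa [Nat.coprime_comm, Nat.Prime.coprime_iff_not_dvd Nat.prime_three])

lemma two_pow_mul_three_pow_mul_coprimeSixPart (n : ℕ) :
    2 ^ n.factorization 2 * 3 ^ n.factorization 3 * coprimeSixPart n = n := by
  have h3 : (ordCompl[2] n).factorization 3 = n.factorization 3 := by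
    simp [Nat.factorization_ordCompl]
  rw [mul_assoc, ← h3, coprimeSixPart, Nat.ordProj_mul_ordCompl_eq_self,
    Nat.ordProj_mul_ordCompl_eq_self]

lemma card_le_card_mul_card_divisors_coprimeSixPart {n : ℕ} {s : Finset ℕ}
    {S : Finset (ℕ × ℕ)} (hs : s ⊆ n.divisors)
    (hS : ∀ d ∈ s, (d.factorization 2, d.factorization 3) ∈ S) :
    #s ≤ #S * #(coprimeSixPart n).divisors := by
  rw [← card_product]
  refine card_le_card_of_injOn (fun d => ((d.factorization 2, d.factorization 3), coprimeSixPart d))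
    (fun d hd => ?_) (fun d _ d' _ h => ?_)
  · have hd' := Nat.mem_divisors.1 (hs hd)
    exact mem_product.2 ⟨hS d hd, Nat.mem_divisors.2
      ⟨coprimeSixPart_dvd_coprimeSixPart hd'.1, coprimeSixPart_ne_zero hd'.2⟩⟩
  · simp only [Prod.mk.injEq] at h
    rw [← two_pow_mul_three_pow_mul_coprimeSixPart d,
      ← two_pow_mul_three_pow_mul_coprimeSixPart d', h.1.1, h.1.2, h.2]

lemma factorization_mem_of_dvd {p d n : ℕ} {q : Prop} [Decidable q] (hp : p.Prime) (hd : d ∣ n)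
    (hn : n ≠ 0) (hq : p ∣ d ↔ q) :
    d.factorization p ∈ if q then Icc 1 (n.factorization p) else {0} := by
  have hd0 : d ≠ 0 := ne_zero_of_dvd_ne_zero hn hd
  split_ifs with hpd <;> rw [← hq] at hpd
  · exact mem_Icc.2 ⟨hp.factorization_pos_of_dvd hd0 hpd,
      (Nat.factorization_le_iff_dvd hd0 hn).2 hd p⟩
  · exact mem_singleton.2 (Nat.factorization_eq_zero_of_not_dvd hpd)

lemma card_divisors_le (n : ℕ) :
    #n.divisors ≤
      (n.factorization 2 + 1) * (n.factorization 3 + 1) * #(coprimeSixPart n).divisors := by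
  rcases eq_or_ne n 0 with rfl | hn
  · simp
  simpa using card_le_card_mul_card_divisors_coprimeSixPart (n := n) subset_rfl
    (S := range (n.factorization 2 + 1) ×ˢ range (n.factorization 3 + 1)) fun d hd => by
      have h := (Nat.factorization_le_iff_dvd (Nat.pos_of_mem_divisors hd).ne' hn).2
        (Nat.dvd_of_mem_divisors hd)
      exact mem_product.2 ⟨mem_range_succ_iff.2 (h 2), mem_range_succ_iff.2 (h 3)⟩

lemma tau'_le (j n : ℕ) :
    tau' j n ≤ (if 2 ∣ j then n.factorization 2 else 1) *
      (if 3 ∣ j then n.factorization 3 else 1) * #(coprimeSixPart n).divisors := by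
  rcases eq_or_ne n 0 with rfl | hn
  · simp [tau']
  have hgcd : ∀ {d p}, p ∣ 6 → Nat.gcd d 6 = j → (p ∣ d ↔ p ∣ j) := fun hp hj => by
    rw [← hj, Nat.dvd_gcd_iff]; exact ⟨fun h => ⟨h, hp⟩, And.left⟩
  have := card_le_card_mul_card_divisors_coprimeSixPart
    (filter_subset (fun d => Nat.gcd d 6 = j) n.divisors)
    (S := (if 2 ∣ j then Icc 1 (n.factorization 2) else {0}) ×ˢ
      (if 3 ∣ j then Icc 1 (n.factorization 3) else {0})) fun d hd => by
      obtain ⟨hd, hj⟩ := mem_filter.1 hd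
      have hd := Nat.dvd_of_mem_divisors hd
      exact mem_product.2 ⟨factorization_mem_of_dvd Nat.prime_two hd hn (hgcd (by norm_num) hj),
        factorization_mem_of_dvd Nat.prime_three hd hn (hgcd (by norm_num) hj)⟩
  refine this.trans_eq ?_
  rw [card_product]
  split_ifs <;> simp

lemma five_le_of_mem_primeFactors {m p : ℕ} (hm : m.Coprime 6) (hp : p ∈ m.primeFactors) :
    5 ≤ p := by
  have hp6 : Nat.Coprime p 6 := hm.coprime_dvd_left (Nat.dvd_of_mem_primeFactors hp)
  have hprime := Nat.prime_of_mem_primeFactors hp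
  by_contra! h
  interval_cases p <;> revert hprime hp6 <;> decide

/-- The constants are `∏ p ^ peakExponent p` and `∏ (peakExponent p + 1)^6` over the primes
`5 ≤ p < 64`. -/
lemma card_divisors_pow_six_mul_le {m : ℕ} (hm0 : m ≠ 0) (hm : m.Coprime 6) :
    #m.divisors ^ 6 * 37630022352809736523799125 ≤ 657892092417861778672665476726784 * m := by
  set S := (range 64).filter (fun p => p.Prime ∧ 5 ≤ p)
  set T := m.primeFactors ∪ S
  have five_le : ∀ p ∈ T, 5 ≤ p := fun p hp =>
    (mem_union.1 hp).elim (five_le_of_mem_primeFactors hm) fun hp => (mem_filter.1 hp).2.2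
  have peak_zero : ∀ p ∈ T, p ∉ S → peakExponent p = 0 := by
    intro p hp hpS
    have hpm := (mem_union.1 hp).resolve_right hpS
    refine peakExponent_eq_zero (not_lt.1 fun h => hpS ?_)
    exact mem_filter.2 ⟨mem_range.2 h, Nat.prime_of_mem_primeFactors hpm, five_le p hp⟩
  have factorization_zero : ∀ p ∈ T, p ∉ m.primeFactors → m.factorization p = 0 :=
    fun p _ hp => Finsupp.notMem_support_iff.1 (by rwa [Nat.support_factorization])
  have h_card : #m.divisors = ∏ p ∈ T, (m.factorization p + 1) := by
    rw [Nat.card_divisors hm0]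
    exact prod_subset subset_union_left fun p hp hpm => by
      rw [factorization_zero p hp hpm, zero_add]
  have h_m : m = ∏ p ∈ T, p ^ m.factorization p := by
    rw [← prod_subset subset_union_left fun p hp hpm => by
      rw [factorization_zero p hp hpm, pow_zero]]
    exact Nat.prod_primeFactors_pow_factorization hm0
  have h_den : ∏ p ∈ T, p ^ peakExponent p = 37630022352809736523799125 := by
    rw [← prod_subset subset_union_right fun p hp hpS => by rw [peak_zero p hp hpS, pow_zero]]
    decide
  have h_num : ∏ p ∈ T, (peakExponent p + 1) ^ 6 = 657892092417861778672665476726784 := by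
    rw [← prod_subset subset_union_right fun p hp hpS => by
      rw [peak_zero p hp hpS, zero_add, one_pow]]
    decide
  rw [← h_den, ← h_num, h_card, ← prod_pow, ← prod_mul_distrib]
  conv_rhs => rw [h_m, ← prod_mul_distrib]
  exact prod_le_prod' fun p hp => succ_pow_six_mul_le (five_le p hp) _

lemma pow_six_le_of_le_mul_card {n t x y : ℕ} {X Y : ℝ} (hn : n ≠ 0)
    (ht : t ≤ x * y * #(coprimeSixPart n).divisors)
    (hx : (x : ℝ) ^ 6 ≤ X * 2 ^ n.factorization 2)
    (hy : (y : ℝ) ^ 6 ≤ Y * 3 ^ n.factorization 3) :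
    (t : ℝ) ^ 6 ≤
      X * Y * (657892092417861778672665476726784 / 37630022352809736523799125) * n := by
  set m := coprimeSixPart n
  have hm : (#m.divisors : ℝ) ^ 6 ≤
      657892092417861778672665476726784 / 37630022352809736523799125 * m := by
    rw [div_mul_eq_mul_div, le_div_iff₀ (by norm_num)]
    exact_mod_cast card_divisors_pow_six_mul_le (coprimeSixPart_ne_zero hn)
      (coprime_six_coprimeSixPart hn)
  have h_n : (n : ℝ) = 2 ^ n.factorization 2 * 3 ^ n.factorization 3 * m := by
    exact_mod_cast (two_pow_mul_three_pow_mul_coprimeSixPart n).symm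
  calc (t : ℝ) ^ 6 ≤ ((x : ℝ) * y * #m.divisors) ^ 6 :=
        pow_le_pow_left₀ (Nat.cast_nonneg _) (by exact_mod_cast ht) 6
    _ = (x : ℝ) ^ 6 * y ^ 6 * #m.divisors ^ 6 := by ring
    _ ≤ X * 2 ^ n.factorization 2 * (Y * 3 ^ n.factorization 3) *
        (657892092417861778672665476726784 / 37630022352809736523799125 * m) :=
      mul_le_mul (mul_le_mul hx hy (by positivity) ((pow_nonneg (by positivity) 6).trans hx)) hm
        (by positivity) (mul_nonneg ((pow_nonneg (by positivity) 6).trans hx)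
          ((pow_nonneg (by positivity) 6).trans hy))
    _ = _ := by rw [h_n]; ring

lemma le_mul_rpow_of_pow_six_le {t n n₀ k : ℕ} {K C : ℝ} (hn : 2 ≤ n)
    (ht : (t : ℝ) ^ 6 ≤ K * n) (ht_sq : t ^ 2 ≤ 4 * n) (hk : 4 * n₀ ≤ (k + 1) ^ 2)
    (hkC : k ≤ C)
    (hK : K * n₀ ≤ C ^ 6 * (n₀ - 1)) (hKC : K ≤ C ^ 6) :
    (t : ℝ) ≤ C * ((n : ℝ) - 1) ^ ((1 : ℝ) / 6) := by
  have hn1 : (1 : ℝ) ≤ n - 1 := by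
    have : (2 : ℝ) ≤ n := by exact_mod_cast hn
    linarith
  have hC : 0 ≤ C := (Nat.cast_nonneg k).trans hkC
  suffices h : (t : ℝ) ^ 6 ≤ C ^ 6 * (n - 1) by
    refine le_of_pow_le_pow_left₀ (n := 6) (by norm_num) (by positivity) ?_
    have h_root : (((n : ℝ) - 1) ^ ((1 : ℝ) / 6)) ^ 6 = n - 1 := by
      rw [← Real.rpow_natCast, ← Real.rpow_mul (by linarith)]
      norm_num
    rwa [mul_pow, h_root]
  rcases le_or_gt n₀ n with h_large | h_small
  · have : K * (n - n₀) ≤ C ^ 6 * (n - n₀) :=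
      mul_le_mul_of_nonneg_right hKC (sub_nonneg.2 (by exact_mod_cast h_large))
    linarith
  · have htk : t ≤ k := by
      by_contra! h
      have := Nat.pow_le_pow_left (show k + 1 ≤ t from h) 2
      omega
    calc (t : ℝ) ^ 6 ≤ C ^ 6 :=
          pow_le_pow_left₀ (Nat.cast_nonneg _) ((Nat.cast_le.2 htk).trans hkC) 6
      _ ≤ C ^ 6 * (n - 1) := le_mul_of_one_le_right (by positivity) hn1

theorem stmt_11 (n : ℕ) (hn : 2 ≤ n) :
    (n.divisors.card : ℝ) ≤ 138.32 * ((n : ℝ) - 1) ^ ((1 : ℝ) / 6) ∧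
    (tau' 1 n : ℝ) ≤ 16.2 * ((n : ℝ) - 1) ^ ((1 : ℝ) / 6) ∧
    (tau' 2 n : ℝ) ≤ 51.3 * ((n : ℝ) - 1) ^ ((1 : ℝ) / 6) ∧
    (tau' 3 n : ℝ) ≤ 32.3 * ((n : ℝ) - 1) ^ ((1 : ℝ) / 6) ∧
    (tau' 6 n : ℝ) ≤ 102.7 * ((n : ℝ) - 1) ^ ((1 : ℝ) / 6) := by
  have hn0 : n ≠ 0 := by omega
  have h_sq : ∀ j, tau' j n ^ 2 ≤ 4 * n := fun j =>
    (Nat.pow_le_pow_left (card_filter_le _ _) 2).trans (card_divisors_sq_le n)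
  have one_le : ∀ {r : ℝ} (e : ℕ), 1 ≤ r → ((1 : ℕ) : ℝ) ^ 6 ≤ 1 * r ^ e :=
    fun e hr => by simpa using one_le_pow₀ hr
  refine ⟨?_, ?_, ?_, ?_, ?_⟩
  · refine le_mul_rpow_of_pow_six_le (n₀ := 3112) (k := 138) hn
      (pow_six_le_of_le_mul_card (X := 531441 / 256) (Y := 15625 / 81) hn0
        (card_divisors_le n) ?_ ?_)
      (card_divisors_sq_le n) (by norm_num) (by norm_num) (by norm_num) (by norm_num)
    · exact_mod_cast succ_pow_six_le_two_pow _
    · exact_mod_cast succ_pow_six_le_three_pow _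
  · exact le_mul_rpow_of_pow_six_le (n₀ := 31) (k := 16) hn
      (pow_six_le_of_le_mul_card (x := 1) (y := 1) hn0 (by simpa using tau'_le 1 n)
        (one_le _ one_le_two) (one_le _ (by norm_num))) (h_sq 1)
      (by norm_num) (by norm_num) (by norm_num) (by norm_num)
  · exact le_mul_rpow_of_pow_six_le (n₀ := 230) (k := 51) hn
      (pow_six_le_of_le_mul_card (y := 1) hn0 (by simpa using tau'_le 2 n)
        (pow_six_le_two_pow _) (one_le _ (by norm_num))) (h_sq 2)
      (by norm_num) (by norm_num) (by norm_num) (by norm_num)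
  · exact le_mul_rpow_of_pow_six_le (n₀ := 100) (k := 32) hn
      (pow_six_le_of_le_mul_card (x := 1) hn0 (by simpa using tau'_le 3 n)
        (one_le _ one_le_two) (pow_six_le_three_pow _)) (h_sq 3)
      (by norm_num) (by norm_num) (by norm_num) (by norm_num)
  · exact le_mul_rpow_of_pow_six_le (n₀ := 182) (k := 102) hn
      (pow_six_le_of_le_mul_card hn0 (by simpa using tau'_le 6 n)
        (pow_six_le_two_pow _) (pow_six_le_three_pow _)) (h_sq 6)
      (by norm_num) (by norm_num) (by norm_num) (by norm_num)
end

section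
/- Let j be a divisor of 6 and let n be a positive integer. Then the number of divisors d of n with gcd(d, 6) = j and d > √(j·n) is at most (1/2)·τ'_j(n). -/
lemma gcd_six_eq_iff (x j : ℕ) (hj : j ∣ 6) :
    Nat.gcd x 6 = j ↔ ((2 ∣ x ↔ 2 ∣ j) ∧ (3 ∣ x ↔ 3 ∣ j)) := by
  have hx : Nat.gcd x 6 = Nat.gcd (x % 6) 6 := by
    rw [Nat.gcd_comm, Nat.gcd_rec]
  have h2 : (2 ∣ x ↔ 2 ∣ x % 6) := by omega
  have h3 : (3 ∣ x ↔ 3 ∣ x % 6) := by omega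
  rw [hx, h2, h3]
  have hr : x % 6 < 6 := Nat.mod_lt _ (by norm_num)
  have hj6 : j ≤ 6 := Nat.le_of_dvd (by norm_num) hj
  interval_cases j <;> first
    | exact absurd hj (by decide)
    | (generalize x % 6 = r at hr ⊢; interval_cases r <;> decide)

theorem stmt_12 (j n : ℕ) (hj : j ∣ 6) (hn : 0 < n) :
    (({d : ℕ | d ∣ n ∧ Nat.gcd d 6 = j ∧ Real.sqrt (j * n) < d}.ncard : ℝ)) ≤
      (tau' j n : ℝ) / 2 := by
  classical
  have hn0 : n ≠ 0 := hn.ne'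
  have hj0 : 0 < j := Nat.pos_of_dvd_of_pos hj (by norm_num)
  set u2 : ℕ := if 2 ∣ j then 1 else 2 ^ (n.factorization 2) with hu2
  set u3 : ℕ := if 3 ∣ j then 1 else 3 ^ (n.factorization 3) with hu3
  have hu2n : u2 ∣ n := by
    rw [hu2]; split
    · exact one_dvd n
    · exact Nat.ordProj_dvd n 2
  have hu3n : u3 ∣ n := by
    rw [hu3]; split
    · exact one_dvd n
    · exact Nat.ordProj_dvd n 3
  have hcop : Nat.Coprime u2 u3 := by
    rw [hu2, hu3]
    split
    · exact Nat.coprime_one_left _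
    · split
      · exact Nat.coprime_one_right _
      · exact Nat.Coprime.pow _ _ ((Nat.coprime_primes Nat.prime_two Nat.prime_three).2 (by norm_num))
  set t : ℕ := u2 * u3 with htdef
  have htn : t ∣ n := hcop.mul_dvd_of_dvd_of_dvd hu2n hu3n
  set N : ℕ := n / t with hN
  have ht0 : 0 < t := Nat.pos_of_dvd_of_pos htn hn
  have hnt : n = t * N := (Nat.mul_div_cancel' htn).symm
  have hNn : N ∣ n := ⟨t, by rw [hnt]; ring⟩
  have hN0 : 0 < N := Nat.pos_of_dvd_of_pos hNn hn
  -- if ¬ 2 ∣ j then ¬ 2 ∣ N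
  have hN2 : ¬ 2 ∣ j → ¬ 2 ∣ N := by
    intro h2j h2N
    have hne : n = 2 ^ (n.factorization 2) * (u3 * N) := by
      conv_lhs => rw [hnt]
      rw [htdef, hu2, if_neg h2j]; ring
    have hoc : ordCompl[2] n = u3 * N :=
      Nat.div_eq_of_eq_mul_right (pow_pos two_pos _) hne
    exact Nat.not_dvd_ordCompl Nat.prime_two hn0 (hoc ▸ h2N.mul_left u3)
  have hN3 : ¬ 3 ∣ j → ¬ 3 ∣ N := by
    intro h3j h3N
    have hne : n = 3 ^ (n.factorization 3) * (u2 * N) := by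
      conv_lhs => rw [hnt]
      rw [htdef, hu3, if_neg h3j]; ring
    have hoc : ordCompl[3] n = u2 * N :=
      Nat.div_eq_of_eq_mul_right (pow_pos three_pos _) hne
    exact Nat.not_dvd_ordCompl Nat.prime_three hn0 (hoc ▸ h3N.mul_left u2)
  set M : ℕ := j * N with hM
  have hM0 : 0 < M := Nat.mul_pos hj0 hN0
  have hMjn : M ≤ j * n := Nat.mul_le_mul_left j (Nat.le_of_dvd hn hNn)
  -- key facts about elements of S
  have hdN : ∀ d : ℕ, d ∣ n → Nat.gcd d 6 = j → d ∣ N := by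
    intro d hdn hg
    have h2 : 2 ∣ d ↔ 2 ∣ j := ((gcd_six_eq_iff d j hj).1 hg).1
    have h3 : 3 ∣ d ↔ 3 ∣ j := ((gcd_six_eq_iff d j hj).1 hg).2
    have hcd2 : Nat.Coprime d u2 := by
      by_cases h2j : 2 ∣ j
      · rw [hu2, if_pos h2j]; exact Nat.coprime_one_right _
      · rw [hu2, if_neg h2j]
        exact Nat.Coprime.pow_right _ (Nat.coprime_comm.1
          ((Nat.Prime.coprime_iff_not_dvd Nat.prime_two).2 (fun h => h2j (h2.1 h))))
    have hcd3 : Nat.Coprime d u3 := by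
      by_cases h3j : 3 ∣ j
      · rw [hu3, if_pos h3j]; exact Nat.coprime_one_right _
      · rw [hu3, if_neg h3j]
        exact Nat.Coprime.pow_right _ (Nat.coprime_comm.1
          ((Nat.Prime.coprime_iff_not_dvd Nat.prime_three).2 (fun h => h3j (h3.1 h))))
    have hcdt : Nat.Coprime d t := Nat.Coprime.mul_right hcd2 hcd3
    exact hcdt.dvd_of_dvd_mul_left (hnt ▸ hdn)
  -- the pairing d ↦ M / d
  have hpair : ∀ d : ℕ, d ∣ n → Nat.gcd d 6 = j →
      (M / d) ∣ n ∧ Nat.gcd (M / d) 6 = j ∧ d * (M / d) = M := by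
    intro d hdn hg
    have hjd : j ∣ d := hg ▸ Nat.gcd_dvd_left d 6
    have hdN' : d ∣ N := hdN d hdn hg
    have hdM : d ∣ M := hdN'.mul_left j
    have hd0 : 0 < d := Nat.pos_of_dvd_of_pos hdn hn
    have hmul : d * (M / d) = M := Nat.mul_div_cancel' hdM
    obtain ⟨e, he⟩ := hjd
    have heN : e ∣ N := (Dvd.intro_left j he.symm).trans hdN'
    have hMdNe : M / d = N / e := by
      rw [hM, he, Nat.mul_div_mul_left _ _ hj0]
    have hMdn : M / d ∣ n := by
      rw [hMdNe]
      exact (Nat.div_dvd_of_dvd heN).trans hNn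
    have hMdj : M / d = j * (N / d) := Nat.mul_div_assoc j hdN'
    refine ⟨hMdn, ?_, hmul⟩
    rw [gcd_six_eq_iff _ j hj]
    constructor
    · constructor
      · intro h2
        have h2M : (2:ℕ) ∣ M := h2.trans (Nat.div_dvd_of_dvd hdM)
        rw [hM] at h2M
        rcases (Nat.Prime.dvd_mul Nat.prime_two).1 h2M with h | h
        · exact h
        · by_contra h2j; exact hN2 h2j h
      · intro h2j
        rw [hMdj]; exact h2j.mul_right _
    · constructor
      · intro h3
        have h3M : (3:ℕ) ∣ M := h3.trans (Nat.div_dvd_of_dvd hdM)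
        rw [hM] at h3M
        rcases (Nat.Prime.dvd_mul Nat.prime_three).1 h3M with h | h
        · exact h
        · by_contra h3j; exact hN3 h3j h
      · intro h3j
        rw [hMdj]; exact h3j.mul_right _
  -- finset formulation
  set S : Finset ℕ := n.divisors.filter (fun d => Nat.gcd d 6 = j) with hS
  set T : Finset ℕ := S.filter (fun d => Real.sqrt (j * n) < (d : ℝ)) with hT
  have hset : {d : ℕ | d ∣ n ∧ Nat.gcd d 6 = j ∧ Real.sqrt (j * n) < d} = ↑T := by
    ext d
    simp [hT, hS, Nat.mem_divisors, hn0, and_assoc]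
  rw [hset, Set.ncard_coe_finset]
  have hTS : T ⊆ S := Finset.filter_subset _ _
  have hinj : ∀ d ∈ T, M / d ∈ S \ T := by
    intro d hdT
    simp only [hT, hS, Finset.mem_filter, Nat.mem_divisors] at hdT
    obtain ⟨⟨⟨hdn, -⟩, hg⟩, hbig⟩ := hdT
    obtain ⟨h1, h2, h3⟩ := hpair d hdn hg
    have hd0 : 0 < d := Nat.pos_of_dvd_of_pos hdn hn
    have hd0' : (0:ℝ) < d := by exact_mod_cast hd0
    have hjn0 : (0:ℝ) ≤ (j:ℝ) * n := by positivity
    have hsq0 : (0:ℝ) ≤ Real.sqrt ((j:ℝ) * n) := Real.sqrt_nonneg _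
    have hsmall : ((M / d : ℕ) : ℝ) ≤ Real.sqrt ((j:ℝ) * n) := by
      have e1 : ((M / d : ℕ) : ℝ) ≤ (M : ℝ) / d := Nat.cast_div_le
      have e2 : (M : ℝ) ≤ (j:ℝ) * n := by exact_mod_cast hMjn
      have e3 : (M : ℝ) / d ≤ ((j:ℝ) * n) / d := by gcongr
      have e4 : ((j:ℝ) * n) / d ≤ Real.sqrt ((j:ℝ) * n) := by
        rw [div_le_iff₀ hd0']
        have hs : Real.sqrt ((j:ℝ)*n) * Real.sqrt ((j:ℝ)*n) = (j:ℝ)*n :=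
          Real.mul_self_sqrt hjn0
        nlinarith [hsq0, hbig]
      linarith
    simp only [Finset.mem_sdiff, hT, hS, Finset.mem_filter, Nat.mem_divisors]
    exact ⟨⟨⟨h1, hn0⟩, h2⟩, fun h => absurd h.2 (not_lt.2 hsmall)⟩
  have hcard : T.card ≤ (S \ T).card := by
    apply Finset.card_le_card_of_injOn (fun d => M / d) hinj
    intro d1 h1 d2 h2 heq
    simp only [hT, hS, Finset.mem_coe, Finset.mem_filter, Nat.mem_divisors] at h1 h2
    have e1 := (hpair d1 h1.1.1.1 h1.1.2).2.2
    have e2 := (hpair d2 h2.1.1.1 h2.1.2).2.2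
    have heq' : M / d1 = M / d2 := heq
    have : d1 * (M / d1) = d2 * (M / d2) := by rw [e1, e2]
    rw [heq'] at this
    have hMd0 : 0 < M / d2 := by
      rcases Nat.eq_zero_or_pos (M / d2) with h | h
      · rw [h, Nat.mul_zero] at e2; omega
      · exact h
    exact Nat.eq_of_mul_eq_mul_right hMd0 this
  have hcard2 : (S \ T).card = S.card - T.card := Finset.card_sdiff_of_subset hTS
  have hle : 2 * T.card ≤ S.card := by
    have := Finset.card_le_card hTS
    omega
  have : (T.card : ℝ) * 2 ≤ (tau' j n : ℝ) := by
    have : ((2 * T.card : ℕ) : ℝ) ≤ ((S.card : ℕ) : ℝ) := by exact_mod_cast hle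
    simpa [tau', ← hS, mul_comm] using this
  linarith
end

section
/- Let (a_n) be a strictly decreasing sequence of real numbers with limit 0, let A = {a_1, a_2, …}, and let j ≥ 1 be an integer. Then the set of limit points of V_j in ℝ^j is exactly T_j \ V_j, where V_j is the set of j-tuples with all coordinates in A arranged in nonincreasing order, and T_j is the set of j-tuples with all coordinates in A ∪ {0} arranged in nonincreasing order. -/
open Filter Topology

theorem stmt_17 (j : ℕ) (hj : 1 ≤ j) (a : ℕ → ℝ) (ha : StrictAnti a)
    (ha0 : Tendsto a atTop (𝓝 0)) :
    -- `V` is the set of `j`-tuples with all coordinates in `A = range a`,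
    -- arranged in nonincreasing order; `T` is the same with coordinates in `A ∪ {0}`.
    let A : Set ℝ := Set.range a
    let V : Set (Fin j → ℝ) := {v | (∀ i, v i ∈ A) ∧ Antitone v}
    let T : Set (Fin j → ℝ) := {v | (∀ i, v i ∈ A ∪ {0}) ∧ Antitone v}
    -- the set of limit points of `V` (limits of sequences of distinct members of `V`)
    -- is exactly `T \ V`
    {x : Fin j → ℝ | ∃ u : ℕ → (Fin j → ℝ), (∀ n, u n ∈ V) ∧
        Function.Injective u ∧ Tendsto u atTop (𝓝 x)} = T \ V := by
  intro A V T
  have hapos : ∀ k, 0 < a k := by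
    intro k
    have h1 : 0 ≤ a (k+1) := by
      refine le_of_tendsto ha0 ?_
      filter_upwards [eventually_ge_atTop (k+1)] with m hm
      exact ha.antitone hm
    exact lt_of_le_of_lt h1 (ha (Nat.lt_succ_self k))
  have hiso : ∀ m, ∃ ε > 0, ∀ k, |a k - a m| < ε → k = m := by
    intro m
    match m with
    | 0 =>
      refine ⟨a 0 - a 1, by linarith [ha (show 0 < 1 by norm_num)], ?_⟩
      intro k hk
      by_contra hne
      have hk1 : 1 ≤ k := Nat.one_le_iff_ne_zero.2 hne
      have h2 : a k ≤ a 1 := ha.antitone hk1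
      have h01 : a 1 < a 0 := ha (by norm_num)
      rw [abs_lt] at hk
      linarith
    | (m+1) =>
      refine ⟨min (a (m+1) - a (m+2)) (a m - a (m+1)), ?_, ?_⟩
      · have h1 := ha (Nat.lt_succ_self (m+1))
        have h2 := ha (Nat.lt_succ_self m)
        simp only [lt_min_iff]
        constructor <;> linarith
      · intro k hk
        rw [abs_lt] at hk
        rcases lt_trichotomy k (m+1) with h | h | h
        · have h1 : a m ≤ a k := ha.antitone (Nat.lt_succ_iff.1 h)
          have h2 : min (a (m+1) - a (m+2)) (a m - a (m+1)) ≤ a m - a (m+1) :=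
            min_le_right _ _
          linarith
        · exact h
        · have h1 : a k ≤ a (m+2) := ha.antitone h
          have h2 : min (a (m+1) - a (m+2)) (a m - a (m+1)) ≤ a (m+1) - a (m+2) :=
            min_le_left _ _
          linarith
  ext x
  simp only [Set.mem_setOf_eq, Set.mem_diff]
  constructor
  · rintro ⟨u, huV, huinj, hulim⟩
    have hcoord : ∀ i, Tendsto (fun n => u n i) atTop (𝓝 (x i)) :=
      fun i => (tendsto_pi_nhds.1 hulim) i
    have hclosed : IsClosed (insert (0:ℝ) A) := ha0.isCompact_insert_range.isClosed
    have hxT : x ∈ T := by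
      constructor
      · intro i
        have hmem : x i ∈ insert (0:ℝ) A := by
          refine hclosed.mem_of_tendsto (hcoord i) ?_
          filter_upwards with n
          exact Set.mem_insert_of_mem _ ((huV n).1 i)
        rcases hmem with h | h
        · exact Or.inr h
        · exact Or.inl h
      · intro i i' hii'
        exact le_of_tendsto_of_tendsto' (hcoord i') (hcoord i) (fun n => (huV n).2 hii')
    refine ⟨hxT, ?_⟩
    rintro ⟨hxA, hxanti⟩
    -- each coordinate x i = a (m i); u n eventually equals x, contradicting injectivity
    have hm : ∀ i, ∃ m, a m = x i := hxA
    choose m hma using hm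
    choose ε hεpos hε using fun i => hiso (m i)
    have hne : (Finset.univ : Finset (Fin j)).Nonempty :=
      ⟨⟨0, hj⟩, Finset.mem_univ _⟩
    set εm := Finset.univ.inf' hne ε with hεm
    have hεmpos : 0 < εm := by
      rw [hεm, Finset.lt_inf'_iff]
      exact fun i _ => hεpos i
    have hεmle : ∀ i, εm ≤ ε i := fun i => Finset.inf'_le _ (Finset.mem_univ i)
    have hev : ∀ᶠ n in atTop, ∀ i, |u n i - x i| < εm := by
      rw [eventually_all]
      intro i
      have := Metric.tendsto_nhds.1 (hcoord i) εm hεmpos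
      filter_upwards [this] with n hn
      simpa [Real.dist_eq] using hn
    obtain ⟨N, hN⟩ := hev.exists_forall_of_atTop
    have heq : ∀ n ≥ N, u n = x := by
      intro n hn
      funext i
      obtain ⟨k, hk⟩ := (huV n).1 i
      have h1 : |a k - a (m i)| < ε i := by
        rw [hma i, hk]
        exact lt_of_lt_of_le (hN n hn i) (hεmle i)
      have := hε i k h1
      rw [← hk, this, hma i]
    have : (N : ℕ) = N + 1 := huinj (by rw [heq N le_rfl, heq (N+1) (by omega)])
    omega
  · rintro ⟨⟨hxA, hxanti⟩, hxnV⟩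
    have hxnonneg : ∀ i, 0 ≤ x i := by
      intro i
      rcases hxA i with ⟨k, hk⟩ | h
      · exact hk ▸ (hapos k).le
      · simp only [Set.mem_singleton_iff] at h
        exact h.ge
    have hzero : ∃ i, x i = 0 := by
      by_contra h
      push_neg at h
      refine hxnV ⟨fun i => ?_, hxanti⟩
      rcases hxA i with hA | h0
      · exact hA
      · exact absurd h0 (by simpa using h i)
    obtain ⟨i0, hi0⟩ := hzero
    have hup : ∀ i i' : Fin j, i ≤ i' → x i = 0 → x i' = 0 := by
      intro i i' hii' h0
      have h1 : x i' ≤ 0 := h0 ▸ hxanti hii'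
      exact le_antisymm h1 (hxnonneg i')
    -- choose indices for nonzero coordinates
    have hAsel : ∀ i : Fin j, ∃ k, x i ≠ 0 → a k = x i := by
      intro i
      by_cases h : x i = 0
      · exact ⟨0, fun h' => absurd h h'⟩
      · rcases hxA i with ⟨k, hk⟩ | h0
        · exact ⟨k, fun _ => hk⟩
        · exact absurd (by simpa using h0) h
    choose f hf using hAsel
    set N := Finset.univ.sup f with hNdef
    have hfN : ∀ i, f i ≤ N := fun i => Finset.le_sup (Finset.mem_univ i)
    have hkey : ∀ (n : ℕ) (i i' : Fin j), x i ≠ 0 → a (N + 1 + n + i'.val) ≤ x i := by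
      intro n i i' h
      calc a (N + 1 + n + i'.val) ≤ a (f i) := ha.antitone (by have := hfN i; omega)
        _ = x i := hf i h
    set u : ℕ → Fin j → ℝ := fun n i => if x i = 0 then a (N + 1 + n + i.val) else x i
      with hu
    refine ⟨u, ?_, ?_, ?_⟩
    · intro n
      constructor
      · intro i
        by_cases h : x i = 0
        · simp only [hu, if_pos h]
          exact ⟨_, rfl⟩
        · simp only [hu, if_neg h]
          rcases hxA i with hA | h0
          · exact hA
          · exact absurd (by simpa using h0) h
      · intro i i' hii'
        by_cases h : x i = 0
        · have h' : x i' = 0 := hup i i' hii' h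
          simp only [hu, if_pos h, if_pos h']
          exact ha.antitone (by have : i.val ≤ i'.val := hii'; omega)
        · by_cases h' : x i' = 0
          · simp only [hu, if_pos h', if_neg h]
            exact hkey n i i' h
          · simp only [hu, if_neg h, if_neg h']
            exact hxanti hii'
    · intro n n' hnn'
      have := congrFun hnn' i0
      simp only [hu, if_pos hi0] at this
      have h2 := ha.injective this
      omega
    · rw [tendsto_pi_nhds]
      intro i
      by_cases h : x i = 0
      · simp only [hu, if_pos h, h]
        have htop : Tendsto (fun n : ℕ => N + 1 + n + i.val) atTop atTop :=
          tendsto_atTop_mono (fun n => by simp only [id_eq]; omega) tendsto_id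
        exact ha0.comp htop
      · simp only [hu, if_neg h]
        exact tendsto_const_nhds
end

section
/- Let (a_n) be a strictly decreasing sequence of real numbers with limit 0, let A = {a_1, a_2, …}, and let j ≥ 1 be an integer. Then for every real number x > 0 there exists ε > 0 such that the open interval (x − ε, x) contains no element of S_j, the set of all sums of j elements of A (with repetition allowed). -/
open Filter Topology

private lemma stmt_18_aux (a : ℕ → ℝ) (ha : StrictAnti a)
    (ha0 : Tendsto a atTop (𝓝 0)) :
    ∀ j : ℕ, ∀ x : ℝ, 0 < x → ∃ ε : ℝ, 0 < ε ∧
      ∀ v : Fin j → ℝ, (∀ i, v i ∈ Set.range a) →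
        (∑ i, v i) ∉ Set.Ioo (x - ε) x := by
  have hpos : ∀ n, 0 < a n := by
    intro n
    have h1 : 0 ≤ a (n + 1) := by
      refine le_of_tendsto ha0 ?_
      filter_upwards [eventually_ge_atTop (n + 1)] with k hk
      exact ha.antitone hk
    linarith [ha (Nat.lt_succ_self n)]
  intro j
  induction j with
  | zero =>
    intro x hx
    refine ⟨x / 2, by linarith, fun v _ => ?_⟩
    simp only [Finset.univ_eq_empty, Finset.sum_empty, Set.mem_Ioo]
    intro h
    linarith [h.1]
  | succ j IH =>
    intro x hx
    have hc : 0 < x / (2 * (j + 1)) := by positivity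
    obtain ⟨N, hN⟩ : ∃ N, ∀ n ≥ N, a n < x / (2 * (j + 1)) := by
      have := (ha0.eventually_lt_const hc)
      exact eventually_atTop.mp this
    classical
    set g : ℕ → ℝ := fun m =>
      if h : 0 < x - a m then (IH (x - a m) h).choose else 1 with hg_def
    have hg : ∀ m, 0 < g m := by
      intro m
      simp only [hg_def]
      split
      next h => exact (IH _ h).choose_spec.1
      next => norm_num
    set F : Finset ℕ := Finset.range (N + 1) with hF
    have hFne : F.Nonempty := ⟨0, by simp [hF]⟩
    set ε : ℝ := min (x / 2) (F.inf' hFne g) with hε_def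
    have hε : 0 < ε := by
      apply lt_min (by linarith)
      rw [Finset.lt_inf'_iff]
      exact fun m _ => hg m
    refine ⟨ε, hε, fun v hv hmem => ?_⟩
    obtain ⟨hs1, hs2⟩ := hmem
    obtain ⟨i₀, hi₀⟩ := Finite.exists_max v
    obtain ⟨m, hm⟩ := hv i₀
    have hvpos : ∀ i, 0 < v i := by
      intro i
      obtain ⟨n, hn⟩ := hv i
      rw [← hn]; exact hpos n
    set s := ∑ i, v i with hs_def
    have hsplit : s = v i₀ + ∑ i : Fin j, v (i₀.succAbove i) :=
      Fin.sum_univ_succAbove v i₀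
    have hrest : 0 ≤ ∑ i : Fin j, v (i₀.succAbove i) :=
      Finset.sum_nonneg fun i _ => (hvpos _).le
    have hvi₀x : v i₀ < x := by linarith
    have h' : 0 < x - a m := by rw [hm]; linarith
    -- s ≤ (j+1) * v i₀
    have hsle : s ≤ (j + 1 : ℕ) • v i₀ := by
      rw [hs_def]
      calc ∑ i, v i ≤ (Finset.univ : Finset (Fin (j+1))).card • v i₀ :=
            Finset.sum_le_card_nsmul _ _ _ (fun i _ => hi₀ i)
        _ = (j + 1 : ℕ) • v i₀ := by rw [Finset.card_univ, Fintype.card_fin]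
    have hsle' : s ≤ (j + 1 : ℝ) * v i₀ := by
      rw [nsmul_eq_mul] at hsle; push_cast at hsle ⊢; linarith
    have hεx2 : ε ≤ x / 2 := min_le_left _ _
    have hsgt : x / 2 < s := by linarith
    have hvi₀gt : x / (2 * (j + 1)) < v i₀ := by
      rw [div_lt_iff₀ (by positivity)] at hsgt ⊢
      nlinarith [hsle', hsgt]
    have hmN : m < N + 1 := by
      by_contra hge
      push_neg at hge
      have := hN m (by omega)
      rw [hm] at this
      linarith
    have hmF : m ∈ F := Finset.mem_range.mpr hmN
    have hεgm : ε ≤ g m := le_trans (min_le_right _ _) (Finset.inf'_le g hmF)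
    have hgm : g m = (IH (x - a m) h').choose := by
      simp only [hg_def]; rw [dif_pos h']
    obtain ⟨hεm_pos, hεm⟩ := (IH (x - a m) h').choose_spec
    refine hεm (fun i => v (i₀.succAbove i)) (fun i => hv _) ?_
    constructor
    · have : x - ε - a m < s - a m := by linarith
      rw [hgm] at hεgm
      have hrestv : s - a m = ∑ i : Fin j, v (i₀.succAbove i) := by
        rw [hsplit, hm]; ring
      linarith [hrestv ▸ this]
    · have : s - a m < x - a m := by linarith
      have hrestv : s - a m = ∑ i : Fin j, v (i₀.succAbove i) := by
        rw [hsplit, hm]; ring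
      linarith [hrestv ▸ this]

theorem stmt_18 (j : ℕ) (hj : 1 ≤ j) (a : ℕ → ℝ) (ha : StrictAnti a)
    (ha0 : Tendsto a atTop (𝓝 0)) :
    -- `S` is the set of all sums of `j` elements of `A = range a`,
    -- with repetition allowed
    let A : Set ℝ := Set.range a
    let S : Set ℝ := {s | ∃ v : Fin j → ℝ, (∀ i, v i ∈ A) ∧ s = ∑ i, v i}
    ∀ x : ℝ, 0 < x → ∃ ε : ℝ, 0 < ε ∧ ∀ s ∈ S, s ∉ Set.Ioo (x - ε) x := by
  intro A S x hx
  obtain ⟨ε, hε, h⟩ := stmt_18_aux a ha ha0 j x hx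
  exact ⟨ε, hε, fun s ⟨v, hvA, hsv⟩ => hsv ▸ h v hvA⟩
end

section
/- Let m ≥ 4 be an integer and let p be a prime not dividing m with m < p < (6/5)(m − 1). Then m/p is not the sum of 3 unit fractions. -/
set_option maxHeartbeats 1000000

/-- `m/n` is the sum of 3 unit fractions: there are positive integers `x, y, z`
with `m/n = 1/x + 1/y + 1/z` as rational numbers. -/
def IsSumOfThreeUnitFractions (m n : ℕ) : Prop :=
  ∃ x y z : ℕ, 0 < x ∧ 0 < y ∧ 0 < z ∧
    (m : ℚ) / n = 1 / x + 1 / y + 1 / z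

lemma aux19 (m p : ℕ) (hm : 12 ≤ (m:ℤ)) (hp : p.Prime)
    (hpm : ¬ (p:ℤ) ∣ (m:ℤ)) (h1 : (m:ℤ) < p) (h5 : 5*(p:ℤ) ≤ 6*(m:ℤ) - 7) :
    ∀ x y z : ℤ, 0 < x → 0 < y → 0 < z → x ≤ y → y ≤ z →
      (m:ℤ)*(x*y*z) = p*(y*z+x*z+x*y) → False := by
  intro x y z hx hy hz hxy hyz heq
  have hp0 : (0:ℤ) < p := by exact_mod_cast hp.pos
  have hm0 : (0:ℤ) < m := by linarith
  have hxz : x ≤ z := le_trans hxy hyz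
  -- m*x ≤ 3p
  have e1 : x*z ≤ y*z := by nlinarith
  have e2 : x*y ≤ y*z := by nlinarith
  have h3p : (m:ℤ)*x ≤ 3*p := by
    have h := heq
    have : (m:ℤ)*x*(y*z) ≤ 3*p*(y*z) := by nlinarith
    exact le_of_mul_le_mul_right this (mul_pos hy hz)
  have hpx : (p:ℤ) < m*x := by
    have h8 : (p:ℤ)*(y*z) < m*x*(y*z) := by nlinarith [mul_pos hx hz, mul_pos hx hy]
    exact lt_of_mul_lt_mul_right h8 (by positivity)
  have hx2 : 2 ≤ x := by nlinarith
  have hx3 : x ≤ 3 := by nlinarith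
  -- y ≤ 8
  have e3 : x*y ≤ x*z := by nlinarith
  have h4 : (m:ℤ)*x*y ≤ p*y + 2*p*x := by
    have hA : ((m:ℤ)*x*y - p*y - 2*p*x)*z ≤ 0 := by nlinarith
    nlinarith [hz]
  have e5 : 4*(m:ℤ)+7 ≤ 5*((m:ℤ)*x - p) := by nlinarith
  have hy8 : y ≤ 8 := by
    have h6 : y*(4*(m:ℤ)+7) ≤ y*(5*((m:ℤ)*x - p)) := mul_le_mul_of_nonneg_left e5 hy.le
    have h7 : y*(5*((m:ℤ)*x - p)) ≤ 10*p*x := by nlinarith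
    nlinarith
  -- key divisibility setup
  have hzD : z*((m:ℤ)*x*y - p*(x+y)) = p*(x*y) := by linear_combination heq
  have hprod : (0:ℤ) < z*((m:ℤ)*x*y - p*(x+y)) := by rw [hzD]; positivity
  have hD0 : (0:ℤ) < (m:ℤ)*x*y - p*(x+y) := by
    by_contra h
    push_neg at h
    linarith [mul_nonpos_of_nonneg_of_nonpos hz.le h, hprod]
  have hp' : Prime ((p:ℤ)) := Nat.prime_iff_prime_int.mp hp
  have hpD : ¬ (p:ℤ) ∣ ((m:ℤ)*x*y - p*(x+y)) := by
    intro hdvd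
    have hmxy : (p:ℤ) ∣ (m:ℤ)*x*y := by
      have hr : ((m:ℤ)*x*y - p*(x+y)) + p*(x+y) = (m:ℤ)*x*y := by ring
      rw [← hr]
      exact dvd_add hdvd ⟨x+y, rfl⟩
    rcases hp'.dvd_mul.mp hmxy with hmx | hyd
    · rcases hp'.dvd_mul.mp hmx with hmd | hxd
      · exact hpm hmd
      · have := Int.le_of_dvd hx hxd; linarith
    · have := Int.le_of_dvd hy hyd; linarith
  have hpz : (p:ℤ) ∣ z := by
    have hd : (p:ℤ) ∣ z*((m:ℤ)*x*y - p*(x+y)) := ⟨x*y, hzD⟩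
    rcases hp'.dvd_mul.mp hd with h | h
    · exact h
    · exact absurd h hpD
  obtain ⟨k, hk⟩ := hpz
  have hzk : (0:ℤ) < p*k := hk ▸ hz
  have hk1 : 1 ≤ k := by
    by_contra hc
    push_neg at hc
    have : (p:ℤ)*k ≤ 0 := mul_nonpos_of_nonneg_of_nonpos hp0.le (by linarith)
    linarith
  have hkD : k*((m:ℤ)*x*y - p*(x+y)) = x*y := by
    have hpe : (p:ℤ)*(k*((m:ℤ)*x*y - p*(x+y))) = p*(x*y) := by
      rw [← hzD, hk]; ring
    exact mul_left_cancel₀ (ne_of_gt hp0) hpe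
  have hDxy : (m:ℤ)*x*y - p*(x+y) ≤ x*y := by
    have hstep : (0:ℤ) ≤ (k-1)*((m:ℤ)*x*y - p*(x+y)) :=
      mul_nonneg (by linarith) hD0.le
    have hexp : x*y - ((m:ℤ)*x*y - p*(x+y)) = (k-1)*((m:ℤ)*x*y - p*(x+y)) := by
      linear_combination (-1 : ℤ) * hkD
    linarith
  have hx23 : x = 2 ∨ x = 3 := by omega
  rcases hx23 with rfl | rfl
  · rcases le_or_gt y 2 with h | h
    · have hy2 : y = 2 := le_antisymm h hxy
      subst hy2
      linarith [hD0]
    · have hb : (2+y)*(5*(p:ℤ)) ≤ (2+y)*(6*(m:ℤ)-7) :=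
        mul_le_mul_of_nonneg_left h5 (by linarith)
      nlinarith [mul_nonneg (show (0:ℤ) ≤ y-3 by linarith) (show (0:ℤ) ≤ (m:ℤ)-12 by linarith), hb]
  · have hb : (3+y)*(5*(p:ℤ)) ≤ (3+y)*(6*(m:ℤ)-7) :=
      mul_le_mul_of_nonneg_left h5 (by linarith)
    nlinarith [mul_nonneg (show (0:ℤ) ≤ y-3 by linarith) (show (0:ℤ) ≤ (m:ℤ)-12 by linarith), hb]

theorem stmt_19 (m p : ℕ) (hm : 4 ≤ m) (hp : p.Prime) (hpm : ¬ p ∣ m)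
    (h1 : m < p) (h2 : (p : ℚ) < (6 / 5) * ((m : ℚ) - 1)) :
    ¬ IsSumOfThreeUnitFractions m p := by
  rintro ⟨x, y, z, hx, hy, hz, heq⟩
  have hp0 : (0:ℚ) < p := by exact_mod_cast hp.pos
  have hx0 : (0:ℚ) < x := by exact_mod_cast hx
  have hy0 : (0:ℚ) < y := by exact_mod_cast hy
  have hz0 : (0:ℚ) < z := by exact_mod_cast hz
  have key : (m:ℚ) * (x*y*z) = p * ((y:ℚ)*z + x*z + x*y) := by
    field_simp at heq
    linarith [heq]
  have keyZ : (m:ℤ) * ((x:ℤ)*y*z) = (p:ℤ) * ((y:ℤ)*z + (x:ℤ)*z + (x:ℤ)*y) := by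
    exact_mod_cast key
  have h2' : 5*(p:ℤ) < 6*(m:ℤ) - 6 := by
    have : (5:ℚ)*p < 6*m - 6 := by linarith
    exact_mod_cast this
  have h5 : 5*(p:ℤ) ≤ 6*(m:ℤ) - 7 := by omega
  have h1' : (m:ℤ) < p := by exact_mod_cast h1
  have hm12 : 12 ≤ (m:ℤ) := by omega
  have hpm' : ¬ (p:ℤ) ∣ (m:ℤ) := by exact_mod_cast hpm
  have H := aux19 m p hm12 hp hpm' h1' h5
  have px : (0:ℤ) < x := by exact_mod_cast hx
  have py : (0:ℤ) < y := by exact_mod_cast hy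
  have pz : (0:ℤ) < z := by exact_mod_cast hz
  rcases le_total (x:ℤ) y with hab | hab <;>
    rcases le_total (y:ℤ) z with hbc | hbc <;>
      rcases le_total (x:ℤ) z with hac | hac
  · exact H x y z px py pz hab hbc (by linear_combination keyZ)
  · exact H x y z px py pz hab hbc (by linear_combination keyZ)
  · exact H x z y px pz py hac hbc (by linear_combination keyZ)
  · exact H z x y pz px py hac hab (by linear_combination keyZ)
  · exact H y x z py px pz hab hac (by linear_combination keyZ)
  · exact H y z x py pz px hbc hac (by linear_combination keyZ)
  · exact H z y x pz py px hbc hab (by linear_combination keyZ)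
  · exact H z y x pz py px hbc hab (by linear_combination keyZ)
end
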